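/- arXiv:1705.02929 — 3 statements merged into one kernel-verified Lean document; each statement's English description precedes it below -/
import Mathlib

section
/- Let G be a permutation group on a finite set Ω. Then every element of the center of G lies in the center of the 2-closure G^(2) of G; that is, Z(G) ≤ Z(G^(2)). -/
open scoped Classical Pointwise

noncomputable section

variable {H : Type*}

/-- The simple quantity of a subset `T` of `H` in the group algebra `ℚ H`. -/
def simpleQ [Group H] [Fintype H] (T : Set H) : MonoidAlgebra ℚ H :=
  ∑ h ∈ T.toFinset, MonoidAlgebra.single h (1 : ℚ)

/-- An S-ring over a finite group `H`: a partition of `H` containing `{1}`,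
closed under inversion, whose simple quantities span a subalgebra of `ℚ H`. -/
structure SRing (H : Type*) [Group H] [Fintype H] where
  basicSets : Set (Set H)
  exists_unique_mem : ∀ h : H, ∃! T, T ∈ basicSets ∧ h ∈ T
  nonempty_of_mem : ∀ T ∈ basicSets, T.Nonempty
  one_mem : ({1} : Set H) ∈ basicSets
  inv_mem : ∀ T ∈ basicSets, T⁻¹ ∈ basicSets
  mul_mem : ∀ T ∈ basicSets, ∀ S ∈ basicSets,
    simpleQ T * simpleQ S ∈ Submodule.span ℚ (simpleQ '' basicSets)

namespace SRing

variable [Group H] [Fintype H]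

/-- The underlying ℚ-subspace of the S-ring. -/
def carrier (A : SRing H) : Submodule ℚ (MonoidAlgebra ℚ H) :=
  Submodule.span ℚ (simpleQ '' A.basicSets)

/-- `S` is an `𝒜`-subset: its simple quantity lies in `𝒜`. -/
def IsSubset (A : SRing H) (S : Set H) : Prop := simpleQ S ∈ A.carrier

/-- The thin radical of the S-ring. -/
def thin (A : SRing H) : Set H := {g | ({g} : Set H) ∈ A.basicSets}

end SRing

/-- The radical of a subset `S`: elements `h` with `hS = Sh = S`. -/
def radSet [Group H] (S : Set H) : Set H := {h | {h} * S = S ∧ S * {h} = S}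

/-- The automorphism group of the Cayley digraph `Cay(H, T)`. -/
def cayAut [Group H] (T : Set H) : Subgroup (Equiv.Perm H) where
  carrier := {g | ∀ x y : H, y * x⁻¹ ∈ T ↔ g y * (g x)⁻¹ ∈ T}
  one_mem' := by intro x y; simp
  mul_mem' := by
    intro a b ha hb x y
    simpa [Equiv.Perm.mul_apply] using (hb x y).trans (ha (b x) (b y))
  inv_mem' := by
    intro a ha x y
    simpa using (ha (a⁻¹ x) (a⁻¹ y)).symm

/-- The automorphism group of an S-ring. -/
def SRing.aut [Group H] [Fintype H] (A : SRing H) : Subgroup (Equiv.Perm H) :=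
  ⨅ T ∈ A.basicSets, cayAut T

/-- The right regular representation of `H` inside `Sym(H)`. -/
def rightRegular (H : Type*) [Group H] : Subgroup (Equiv.Perm H) where
  carrier := Set.range fun h : H => Equiv.mulRight h
  one_mem' := ⟨1, by ext x; simp⟩
  mul_mem' := by
    rintro _ _ ⟨a, rfl⟩ ⟨b, rfl⟩
    exact ⟨b * a, by ext x; simp [mul_assoc]⟩
  inv_mem' := by
    rintro _ ⟨a, rfl⟩
    exact ⟨a⁻¹, by ext x; simp⟩

/-- The orbit of `h` under the stabilizer of the identity in `G ≤ Sym(H)`. -/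
def orbitOfStab [Group H] (G : Subgroup (Equiv.Perm H)) (h : H) : Set H :=
  {x | ∃ g ∈ G, g 1 = 1 ∧ g h = x}

/-- A Schurian S-ring: its basic sets are the orbits of the identity-stabilizer
of some overgroup of the right regular representation. -/
def SRing.IsSchurian [Group H] [Fintype H] (A : SRing H) : Prop :=
  ∃ G : Subgroup (Equiv.Perm H), rightRegular H ≤ G ∧
    A.basicSets = {S | ∃ h : H, S = orbitOfStab G h}

/-- A p-S-ring: all basic sets have `p`-power size. -/
def SRing.IsPSRing [Group H] [Fintype H] (A : SRing H) (p : ℕ) : Prop :=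
  ∀ T ∈ A.basicSets, ∃ k : ℕ, Nat.card T = p ^ k

/-- A decomposable S-ring: a nontrivial `E/F`-wreath product. -/
def SRing.Decomposable [Group H] [Fintype H] (A : SRing H) : Prop :=
  ∃ E F : Subgroup H, F.Normal ∧ F ≤ E ∧ E ≠ ⊤ ∧ F ≠ ⊥ ∧
    A.IsSubset ↑E ∧ A.IsSubset ↑F ∧
    ∀ T ∈ A.basicSets, T ⊆ ((E : Set H))ᶜ → (F : Set H) ⊆ radSet T

/-- The 2-closure of a permutation group `G ≤ Sym(Ω)`: all permutations
preserving every `G`-orbit on `Ω × Ω`. -/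
def twoClosure {Ω : Type*} (G : Subgroup (Equiv.Perm Ω)) : Subgroup (Equiv.Perm Ω) where
  carrier := {γ | ∀ a b : Ω, ∃ g ∈ G, g a = γ a ∧ g b = γ b}
  one_mem' := fun a b => ⟨1, G.one_mem, rfl, rfl⟩
  mul_mem' := by
    intro γ δ hγ hδ a b
    obtain ⟨g, hg, hga, hgb⟩ := hδ a b
    obtain ⟨g', hg', hg'a, hg'b⟩ := hγ (δ a) (δ b)
    exact ⟨g' * g, G.mul_mem hg' hg, by simp [Equiv.Perm.mul_apply, hga, hg'a],
      by simp [Equiv.Perm.mul_apply, hgb, hg'b]⟩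
  inv_mem' := by
    intro γ hγ a b
    obtain ⟨g, hg, hga, hgb⟩ := hγ (γ⁻¹ a) (γ⁻¹ b)
    have h1 : g (γ⁻¹ a) = a := by rw [hga]; simp
    have h2 : g (γ⁻¹ b) = b := by rw [hgb]; simp
    refine ⟨g⁻¹, G.inv_mem hg, ?_, ?_⟩
    · exact g.injective (by rw [h1]; simp)
    · exact g.injective (by rw [h2]; simp)

theorem le_twoClosure {Ω : Type*} (G : Subgroup (Equiv.Perm Ω)) : G ≤ twoClosure G :=
  fun g hg _ _ => ⟨g, hg, rfl, rfl⟩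

theorem commute_of_mem_twoClosure {Ω : Type*} {G : Subgroup (Equiv.Perm Ω)}
    {γ x : Equiv.Perm Ω} (hcen : ∀ g ∈ G, Commute γ g) (hx : x ∈ twoClosure G) :
    Commute γ x := by
  refine Equiv.ext fun a => ?_
  obtain ⟨g, hg, hga, hgγa⟩ := hx a (γ a)
  calc γ (x a) = γ (g a) := by rw [hga]
    _ = g (γ a) := congrArg (· a) (hcen g hg).eq
    _ = x (γ a) := hgγa

theorem stmt0_general {Ω : Type*} (G : Subgroup (Equiv.Perm Ω))
    (γ : Equiv.Perm Ω) (hγ : γ ∈ G) (hcen : ∀ x ∈ G, Commute γ x) :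
    γ ∈ twoClosure G ∧ ∀ x ∈ twoClosure G, Commute γ x :=
  ⟨le_twoClosure G hγ, fun _ hx => commute_of_mem_twoClosure hcen hx⟩

/-- Z(G) ≤ Z(G^(2)). -/
theorem stmt0 {Ω : Type*} [Finite Ω] (G : Subgroup (Equiv.Perm Ω))
    (γ : Equiv.Perm Ω) (hγ : γ ∈ G) (hcen : ∀ x ∈ G, Commute γ x) :
    γ ∈ twoClosure G ∧ ∀ x ∈ twoClosure G, Commute γ x :=
  stmt0_general G γ hγ hcen
end
end

section
/- Let 𝒜 be a p-S-ring over a finite p-group H, let K ≤ H be an 𝒜-subgroup of index p, and let T be a basic set of 𝒜. Then T is contained in a single coset of K; in particular, rad(T) ≤ K. -/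
open scoped Classical Pointwise

noncomputable section

variable {H : Type*}

/-!
The coefficient of `x` in `K * T` counts the elements of `T` in the right coset `K x`; as
`K * T` lies in `𝒜`, this count is the same for every `x ∈ T`, so the number `m` of right
cosets of `K` meeting `T` divides `|T| = p ^ k`. A basic set meeting the `𝒜`-subgroup `K` lies
inside it; otherwise `T` misses the coset `K` itself, so `m < p = [H : K]`, which forces `m = 1`.
-/

open Finset

theorem simpleQ_coeff [Group H] [Fintype H] (S : Set H) (x : H) :
    (simpleQ S).coeff x = if x ∈ S then 1 else 0 := by
  simp [simpleQ, Finsupp.single_apply]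

theorem simpleQ_mul_simpleQ_coeff [Group H] [Fintype H] (S T : Set H) (x : H) :
    (simpleQ S * simpleQ T).coeff x = #{t ∈ T.toFinset | x * t⁻¹ ∈ S} := by
  rw [simpleQ.eq_1 T, Finset.mul_sum]
  simp [simpleQ_coeff]

theorem Finset.card_eq_card_image_mul_of_card_fiber_eq {ι M : Type*} [DecidableEq M]
    {f : ι → M} {s : Finset ι} {n : ℕ} (h : ∀ a ∈ s, #{b ∈ s | f b = f a} = n) :
    #s = #(s.image f) * n := by
  rw [card_eq_sum_card_image f s, sum_const_nat]
  rintro _ hb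
  obtain ⟨a, ha, rfl⟩ := mem_image.1 hb
  exact h a ha

theorem Nat.eq_one_of_dvd_prime_pow_of_lt {p k m : ℕ} (hp : p.Prime) (hm : m ∣ p ^ k)
    (hlt : m < p) : m = 1 := by
  obtain ⟨i, -, rfl⟩ := (Nat.dvd_prime_pow hp).1 hm
  have : i < 1 := (Nat.pow_lt_pow_iff_right hp.one_lt).1 (by simpa using hlt)
  simp [Nat.lt_one_iff.1 this]

namespace SRing

variable [Group H] [Fintype H] (A : SRing H)

theorem simpleQ_mem_carrier {T : Set H} (hT : T ∈ A.basicSets) : simpleQ T ∈ A.carrier :=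
  Submodule.subset_span ⟨T, hT, rfl⟩

theorem mul_mem_carrier {a b : MonoidAlgebra ℚ H} (ha : a ∈ A.carrier) (hb : b ∈ A.carrier) :
    a * b ∈ A.carrier := by
  have : A.carrier * A.carrier ≤ A.carrier := by
    rw [carrier, Submodule.span_mul_span, Submodule.span_le]
    rintro _ ⟨_, ⟨S, hS, rfl⟩, _, ⟨S', hS', rfl⟩, rfl⟩
    exact A.mul_mem S hS S' hS'
  exact this (Submodule.mul_mem_mul ha hb)

theorem coeff_eq_of_mem_carrier {f : MonoidAlgebra ℚ H} (hf : f ∈ A.carrier) {T : Set H}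
    (hT : T ∈ A.basicSets) {x y : H} (hx : x ∈ T) (hy : y ∈ T) : f.coeff x = f.coeff y := by
  induction hf using Submodule.span_induction with
  | mem g hg =>
    obtain ⟨S, hS, rfl⟩ := hg
    have hST : x ∈ S ∨ y ∈ S → S = T := by
      rintro (hxS | hyS)
      · exact (A.exists_unique_mem x).unique ⟨hS, hxS⟩ ⟨hT, hx⟩
      · exact (A.exists_unique_mem y).unique ⟨hS, hyS⟩ ⟨hT, hy⟩
    by_cases h : x ∈ S ∨ y ∈ S
    · obtain rfl := hST h
      simp [simpleQ_coeff, hx, hy]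
    · simp [simpleQ_coeff, not_or.1 h]
  | zero => rfl
  | add a b _ _ iha ihb => simp only [MonoidAlgebra.coeff_add, Finsupp.add_apply, iha, ihb]
  | smul c a _ ih => simp only [MonoidAlgebra.coeff_smul_apply, ih]

theorem subset_of_isSubset {S T : Set H} (hS : A.IsSubset S) (hT : T ∈ A.basicSets) {t : H}
    (htT : t ∈ T) (htS : t ∈ S) : T ⊆ S := by
  intro u huT
  have := A.coeff_eq_of_mem_carrier hS hT huT htT
  simp only [simpleQ_coeff, htS, if_true] at this
  by_contra huS
  simp [huS] at this

theorem card_filter_mul_inv_mem_eq {S T : Set H} (hS : A.IsSubset S) (hT : T ∈ A.basicSets)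
    {x y : H} (hx : x ∈ T) (hy : y ∈ T) :
    #{t ∈ T.toFinset | x * t⁻¹ ∈ S} = #{t ∈ T.toFinset | y * t⁻¹ ∈ S} := by
  have := A.coeff_eq_of_mem_carrier (A.mul_mem_carrier hS (A.simpleQ_mem_carrier hT)) hT hx hy
  simpa [simpleQ_mul_simpleQ_coeff] using this

theorem mul_inv_mem_of_mem_basicSets {p k : ℕ} (hp : p.Prime) {K : Subgroup H}
    (hK : A.IsSubset K) (hidx : K.index = p) {T : Set H} (hT : T ∈ A.basicSets)
    (hcard : Nat.card T = p ^ k) {s t : H} (hs : s ∈ T) (ht : t ∈ T) : s * t⁻¹ ∈ K := by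
  by_cases hTK : ∃ u ∈ T, u ∈ K
  · obtain ⟨u, huT, huK⟩ := hTK
    have hTsub := A.subset_of_isSubset hK hT huT huK
    exact K.mul_mem (hTsub hs) (K.inv_mem (hTsub ht))
  push Not at hTK
  let f : H → Quotient (QuotientGroup.rightRel K) := Quotient.mk _
  have hf (u v : H) : f u = f v ↔ v * u⁻¹ ∈ K :=
    Quotient.eq.trans QuotientGroup.rightRel_apply
  have hfiber : ∀ u ∈ T.toFinset,
      #{v ∈ T.toFinset | f v = f u} = #{v ∈ T.toFinset | t * v⁻¹ ∈ K} := by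
    intro u hu
    simp only [hf]
    exact A.card_filter_mul_inv_mem_eq hK hT (Set.mem_toFinset.1 hu) ht
  have hdvd : #(T.toFinset.image f) ∣ p ^ k := by
    rw [← hcard, Nat.card_coe_set_eq, Set.ncard_eq_toFinset_card',
      card_eq_card_image_mul_of_card_fiber_eq hfiber]
    exact dvd_mul_right _ _
  have hlt : #(T.toFinset.image f) < p := by
    have himage : T.toFinset.image f ⊆ univ.erase (f 1) := by
      intro q hq
      obtain ⟨u, hu, rfl⟩ := mem_image.1 hq
      simpa [hf] using hTK u (Set.mem_toFinset.1 hu)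
    calc #(T.toFinset.image f) ≤ #(univ.erase (f 1)) := card_le_card himage
      _ < Fintype.card (Quotient (QuotientGroup.rightRel K)) := card_erase_lt_of_mem (mem_univ _)
      _ = p := by
        rw [QuotientGroup.card_quotient_rightRel, Fintype.card_eq_nat_card,
          ← Subgroup.index_eq_card, hidx]
  have hst := card_le_one.1 (Nat.eq_one_of_dvd_prime_pow_of_lt hp hdvd hlt).le (f t)
    (mem_image_of_mem f (Set.mem_toFinset.2 ht)) (f s) (mem_image_of_mem f (Set.mem_toFinset.2 hs))
  exact (hf t s).1 hst

end SRing

theorem stmt9_general {H : Type*} [Group H] [Fintype H] {p : ℕ} (hp : p.Prime)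
    (A : SRing H) (hA : A.IsPSRing p)
    (K : Subgroup H) (hK : A.IsSubset ↑K) (hidx : K.index = p)
    (T : Set H) (hT : T ∈ A.basicSets) :
    (∃ h : H, T ⊆ (fun k => k * h) '' (K : Set H)) ∧ radSet T ⊆ ↑K := by
  obtain ⟨k, hk⟩ := hA T hT
  obtain ⟨t₀, ht₀⟩ := A.nonempty_of_mem T hT
  have hcoset : ∀ s ∈ T, s * t₀⁻¹ ∈ K := fun s hs =>
    A.mul_inv_mem_of_mem_basicSets hp hK hidx hT hk hs ht₀
  refine ⟨⟨t₀, fun s hs => ⟨s * t₀⁻¹, hcoset s hs, inv_mul_cancel_right s t₀⟩⟩,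
    fun g hg => ?_⟩
  have hgt₀ : g * t₀ ∈ T := hg.1 ▸ Set.mul_mem_mul rfl ht₀
  simpa using hcoset _ hgt₀

/-- a basic set of a p-S-ring lies in a single coset of an
𝒜-subgroup of index p, and its radical is contained in that subgroup. -/
theorem stmt9 {H : Type*} [Group H] [Fintype H] {p : ℕ} (hp : p.Prime)
    (hpH : IsPGroup p H) (A : SRing H) (hA : A.IsPSRing p)
    (K : Subgroup H) (hK : A.IsSubset ↑K) (hidx : K.index = p)
    (T : Set H) (hT : T ∈ A.basicSets) :
    (∃ h : H, T ⊆ (fun k => k * h) '' (K : Set H)) ∧ radSet T ⊆ ↑K :=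
  stmt9_general hp A hA K hK hidx T hT
end
end

section
/- Let p be an odd prime, H ≅ (ℤ/p)³, and let 𝒜 be the exceptional S-ring over H, i.e., the transitivity module V(H, ⟨x⟩) where x is the unipotent automorphism given in coordinates by the 3×3 upper-triangular Jordan block with ones on the diagonal and superdiagonal. Then |Aut(𝒜)| = p⁴. -/
open scoped Classical Pointwise

noncomputable section

variable {H : Type*}

/-- The unipotent Jordan map on `(ℤ/p)³` given by the upper-triangular Jordan
block with ones on the diagonal and superdiagonal. -/
def jordanMap {p : ℕ} (v : Fin 3 → ZMod p) : Fin 3 → ZMod p :=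
  ![v 0 + v 1, v 1 + v 2, v 2]

/-!
Write `J` for the Jordan block and `V = (ZMod p)³`. Since `p` is odd, `J ^ n` only depends on
`n mod p` and extends to a one-parameter group `J ^ k = 1 + k N + (k choose 2) N ²`, `k : ZMod p`.
A permutation `g` is an automorphism of the S-ring iff every difference `g y - g x` lies in the
`J`-orbit of `y - x`, i.e. equals `J ^ k (y - x)` for some `k` depending on `x, y`. Comparing the
coordinates of these relations shows that `k` can be chosen independently of `x, y`, so `g` is an
affine map `v ↦ J ^ k v + u`. These `p · p³` maps are distinct, whence `|Aut 𝒜| = p⁴`.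
-/

section JordanPow

variable {K : Type*} [Field K]

/-- For the nilpotent part `N` of the Jordan block, `J ^ k = 1 + k N + (k choose 2) N ^ 2`;
this formula makes sense for every `k : K`. -/
def jordanPow (k : K) : (Fin 3 → K) →ₗ[K] Fin 3 → K :=
  Matrix.toLin' !![1, k, k * (k - 1) / 2; 0, 1, k; 0, 0, 1]

theorem jordanPow_apply (k : K) (v : Fin 3 → K) :
    jordanPow k v = ![v 0 + k * v 1 + k * (k - 1) / 2 * v 2, v 1 + k * v 2, v 2] := by
  ext i
  fin_cases i <;> simp [jordanPow, Matrix.mulVec, dotProduct, Fin.sum_univ_three]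

theorem eq_jordanPow_iff {k : K} {v w : Fin 3 → K} :
    w = jordanPow k v ↔ w 0 = v 0 + k * v 1 + k * (k - 1) / 2 * v 2 ∧
      w 1 = v 1 + k * v 2 ∧ w 2 = v 2 := by
  rw [jordanPow_apply, funext_iff, Fin.forall_fin_succ, Fin.forall_fin_succ, Fin.forall_fin_succ]
  simp

theorem jordanPow_zero : jordanPow (0 : K) = LinearMap.id := by
  refine LinearMap.ext fun v => funext fun i => ?_
  fin_cases i <;> simp [jordanPow_apply]

theorem jordanPow_add [NeZero (2 : K)] (a b : K) :
    jordanPow (a + b) = jordanPow a ∘ₗ jordanPow b := by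
  refine LinearMap.ext fun v => funext fun i => ?_
  fin_cases i <;> simp [jordanPow_apply] <;> field_simp <;> ring

theorem jordanPow_add_apply [NeZero (2 : K)] (a b : K) (v : Fin 3 → K) :
    jordanPow (a + b) v = jordanPow a (jordanPow b v) := by
  rw [jordanPow_add]; rfl

end JordanPow

section ZModJordan

variable {p : ℕ} [Fact p.Prime]

theorem jordanPow_one : ⇑(jordanPow (1 : ZMod p)) = jordanMap := by
  ext v i
  fin_cases i <;> simp [jordanPow_apply, jordanMap]

theorem iterate_jordanMap [NeZero (2 : ZMod p)] (n : ℕ) :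
    jordanMap^[n] = jordanPow (n : ZMod p) := by
  induction n with
  | zero => simp [jordanPow_zero]
  | succ n ih =>
    ext v : 1
    rw [Function.iterate_succ_apply', ih, Nat.cast_succ, add_comm, jordanPow_add_apply,
      jordanPow_one]

theorem exists_iterate_jordanMap_eq_iff [NeZero (2 : ZMod p)] (v w : Fin 3 → ZMod p) :
    (∃ n : ℕ, jordanMap^[n] v = w) ↔ ∃ k : ZMod p, jordanPow k v = w := by
  simp only [iterate_jordanMap]
  refine ⟨fun ⟨n, hn⟩ => ⟨n, hn⟩, fun ⟨k, hk⟩ => ⟨k.val, ?_⟩⟩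
  rwa [ZMod.natCast_zmod_val]

end ZModJordan

section Rigidity

variable {K : Type*} [Field K]

theorem exists_common_slope (c : K → K) {α : K → K → K} {β : K → K}
    (h : ∀ s t s' t', t ≠ t' → ∃ k, β t' - β t = k * (t' - t) ∧
      α s' t' - α s t = k * (s' - s) + c k * (t' - t)) :
    ∃ k, ∀ s t s' t', t ≠ t' → β t' - β t = k * (t' - t) ∧
      α s' t' - α s t = k * (s' - s) + c k * (t' - t) := by
  -- `β` pins down the slope `k` of a step `t → t'`; moving `s` by one on either end shows
  -- that `k` is also the slope `α 1 - α 0` of `α` in `s`, both at `t` and at `t'`.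
  have slope_eq : ∀ t t', t ≠ t' → ∀ k, β t' - β t = k * (t' - t) →
      k = α 1 t - α 0 t ∧ k = α 1 t' - α 0 t' := by
    intro t t' hne k hβ
    have hd : t' - t ≠ 0 := sub_ne_zero.2 hne.symm
    obtain ⟨k₀, hβ₀, hα₀⟩ := h 0 t 0 t' hne
    obtain ⟨k₁, hβ₁, hα₁⟩ := h 1 t 0 t' hne
    obtain ⟨k₂, hβ₂, hα₂⟩ := h 0 t 1 t' hne
    obtain rfl : k = k₀ := mul_right_cancel₀ hd (hβ.symm.trans hβ₀)
    obtain rfl : k₁ = k := mul_right_cancel₀ hd (hβ₁.symm.trans hβ)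
    obtain rfl : k₂ = k₁ := mul_right_cancel₀ hd (hβ₂.symm.trans hβ)
    exact ⟨by linear_combination hα₁ - hα₀, by linear_combination hα₀ - hα₂⟩
  have slope_const : ∀ t, α 1 t - α 0 t = α 1 0 - α 0 0 := by
    intro t
    rcases eq_or_ne t 0 with rfl | ht
    · rfl
    obtain ⟨k, hβ, -⟩ := h 0 t 0 0 ht
    obtain ⟨h₁, h₂⟩ := slope_eq t 0 ht k hβ
    rw [← h₁, ← h₂]
  refine ⟨α 1 0 - α 0 0, fun s t s' t' hne => ?_⟩
  obtain ⟨k, hβ, hα⟩ := h s t s' t' hne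
  obtain rfl : k = α 1 0 - α 0 0 := (slope_eq t t' hne k hβ).1.trans (slope_const t)
  exact ⟨hβ, hα⟩

theorem exists_eq_jordanPow {h : (Fin 3 → K) → Fin 3 → K} (h0 : h 0 = 0)
    (hh : ∀ x y, ∃ k, jordanPow k (y - x) = h y - h x) : ∃ k, h = jordanPow k := by
  have coords : ∀ x y, ∃ k,
      h y 0 - h x 0 = y 0 - x 0 + k * (y 1 - x 1) + k * (k - 1) / 2 * (y 2 - x 2) ∧
      h y 1 - h x 1 = y 1 - x 1 + k * (y 2 - x 2) ∧ h y 2 - h x 2 = y 2 - x 2 := fun x y => by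
    obtain ⟨k, hk⟩ := hh x y
    exact ⟨k, by simpa using eq_jordanPow_iff.1 hk.symm⟩
  have apply_two (v : Fin 3 → K) : h v 2 = v 2 := by
    obtain ⟨k, -, -, e⟩ := coords 0 v
    simpa [h0] using e
  have apply_one (v : Fin 3 → K) : h v 1 = v 1 + h ![0, 0, v 2] 1 := by
    obtain ⟨k, -, e, -⟩ := coords ![0, 0, v 2] v
    simp only [Matrix.cons_val] at e
    linear_combination e
  have apply_zero (v : Fin 3 → K) : h v 0 = v 0 + h ![0, v 1, v 2] 0 := by
    obtain ⟨k, e, -⟩ := coords ![0, v 1, v 2] v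
    simp only [Matrix.cons_val] at e
    linear_combination e
  obtain ⟨k, hk⟩ := exists_common_slope (fun k => k * (k - 1) / 2)
    (α := fun s t => h ![0, s, t] 0) (β := fun t => h ![0, 0, t] 1) fun s t s' t' _ => by
      obtain ⟨k, e₀, e₁, -⟩ := coords ![0, s, t] ![0, s', t']
      simp only [Matrix.cons_val] at e₀ e₁
      rw [apply_one ![0, s, t], apply_one ![0, s', t']] at e₁
      simp only [Matrix.cons_val] at e₁
      exact ⟨k, by linear_combination e₁, by linear_combination e₀⟩
  have pair (x y : Fin 3 → K) (hxy : x 2 ≠ y 2) : h y - h x = jordanPow k (y - x) := by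
    obtain ⟨hβ, hα⟩ := hk (x 1) (x 2) (y 1) (y 2) hxy
    rw [eq_jordanPow_iff]
    simp only [Pi.sub_apply]
    rw [apply_zero x, apply_zero y, apply_one x, apply_one y, apply_two, apply_two]
    exact ⟨by linear_combination hα, by linear_combination hβ, rfl⟩
  refine ⟨k, funext fun v => ?_⟩
  rcases eq_or_ne (v 2) 0 with hv | hv
  · -- `pair` needs distinct last coordinates, so pass through a point `z` off that plane
    set z : Fin 3 → K := ![0, 0, 1]
    calc h v = (h v - h z) - (h 0 - h z) := by rw [h0]; abel
      _ = jordanPow k (v - z) - jordanPow k (0 - z) := by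
        rw [pair z v (by simp [z, hv]), pair z 0 (by simp [z])]
      _ = jordanPow k v := by rw [← map_sub, sub_sub_sub_cancel_right, sub_zero]
  · simpa [h0] using pair 0 v (by simpa using hv.symm)

end Rigidity

theorem SRing.mem_aut_iff {H : Type*} [Group H] [Fintype H] (A : SRing H)
    (g : Equiv.Perm H) :
    g ∈ A.aut ↔ ∀ T ∈ A.basicSets, ∀ x y, y * x⁻¹ ∈ T → g y * (g x)⁻¹ ∈ T := by
  simp only [SRing.aut, Subgroup.mem_iInf]
  refine ⟨fun hg T hT x y => (hg T hT x y).1,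
    fun hg T hT x y => ⟨hg T hT x y, fun hgT => ?_⟩⟩
  -- the basic sets partition `H`, so the one containing `y * x⁻¹` must be `T`
  obtain ⟨T', ⟨hT', hxy⟩, -⟩ := A.exists_unique_mem (y * x⁻¹)
  obtain rfl : T = T' :=
    (A.exists_unique_mem _).unique ⟨hT, hgT⟩ ⟨hT', hg T' hT' x y hxy⟩
  exact hxy

open Multiplicative in
theorem SRing.mem_aut_iff_exists_iterate {V : Type*} [AddGroup V] [Fintype V] (f : V → V)
    (A : SRing (Multiplicative V))
    (hA : A.basicSets = {S | ∃ v : V, S = {w | ∃ n : ℕ, f^[n] v = toAdd w}})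
    (g : Equiv.Perm (Multiplicative V)) :
    g ∈ A.aut ↔
      ∀ x y, ∃ n : ℕ, f^[n] (toAdd y - toAdd x) = toAdd (g y) - toAdd (g x) := by
  have toAdd_mul_inv (x y : Multiplicative V) : toAdd (y * x⁻¹) = toAdd y - toAdd x := by
    rw [toAdd_mul, toAdd_inv, sub_eq_add_neg]
  simp only [A.mem_aut_iff, hA, Set.mem_ofPred_eq, forall_exists_index, forall_eq_apply_imp_iff,
    toAdd_mul_inv]
  refine ⟨fun hg x y => hg _ x y 0 rfl, fun hg v x y n hn => ?_⟩
  obtain ⟨m, hm⟩ := hg x y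
  exact ⟨m + n, by rw [Function.iterate_add_apply, hn, hm]⟩

section AffineJordan

variable {K : Type*} [Field K] [NeZero (2 : K)]

def jordanPowEquiv (k : K) : (Fin 3 → K) ≃ₗ[K] Fin 3 → K :=
  .ofLinearMap (jordanPow k) (jordanPow (-k))
    (by rw [← jordanPow_add, add_neg_cancel, jordanPow_zero])
    (by rw [← jordanPow_add, neg_add_cancel, jordanPow_zero])

open Multiplicative

def jordanAffinePerm (k : K) (u : Fin 3 → K) : Equiv.Perm (Multiplicative (Fin 3 → K)) :=
  ofAdd.permCongr ((jordanPowEquiv k).toEquiv.trans (Equiv.addRight u))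

theorem toAdd_jordanAffinePerm (k : K) (u : Fin 3 → K) (w : Multiplicative (Fin 3 → K)) :
    toAdd (jordanAffinePerm k u w) = jordanPow k (toAdd w) + u :=
  rfl

theorem jordanAffinePerm_injective :
    Function.Injective fun ku : K × (Fin 3 → K) => jordanAffinePerm ku.1 ku.2 := by
  rintro ⟨k, u⟩ ⟨k', u'⟩ h
  have happ (w : Fin 3 → K) := congrArg (fun g : Equiv.Perm _ => toAdd (g (ofAdd w))) h
  simp only [toAdd_jordanAffinePerm, toAdd_ofAdd] at happ
  obtain rfl : u = u' := by simpa using happ 0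
  obtain rfl : k = k' := by simpa [jordanPow_apply] using congrFun (happ ![0, 1, 0]) 0
  rfl

theorem exists_jordanAffinePerm_eq_iff (g : Equiv.Perm (Multiplicative (Fin 3 → K))) :
    (∃ k u, jordanAffinePerm k u = g) ↔
      ∀ x y, ∃ k, jordanPow k (toAdd y - toAdd x) = toAdd (g y) - toAdd (g x) := by
  refine ⟨?_, fun hg => ?_⟩
  · rintro ⟨k, u, rfl⟩ x y
    refine ⟨k, ?_⟩
    rw [toAdd_jordanAffinePerm, toAdd_jordanAffinePerm, map_sub, add_sub_add_right_eq_sub]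
  obtain ⟨k, hk⟩ := exists_eq_jordanPow (h := fun v => toAdd (g (ofAdd v)) - toAdd (g 1))
    (by simp) fun x y => by simpa using hg (ofAdd x) (ofAdd y)
  refine ⟨k, toAdd (g 1), Equiv.ext fun w => toAdd.injective ?_⟩
  rw [toAdd_jordanAffinePerm, ← congrFun hk (toAdd w)]
  simp

end AffineJordan

/-- the exceptional S-ring over `ℤ_p³` (p odd) has automorphism
group of order `p⁴`. -/
theorem stmt17 {p : ℕ} [NeZero p] (hp : p.Prime) (hodd : Odd p)
    (A : SRing (Multiplicative (Fin 3 → ZMod p)))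
    (hA : A.basicSets = {S : Set (Multiplicative (Fin 3 → ZMod p)) |
      ∃ v : Fin 3 → ZMod p,
        S = {w | ∃ n : ℕ, jordanMap^[n] v = Multiplicative.toAdd w}}) :
    Nat.card A.aut = p ^ 4 := by
  have := Fact.mk hp
  have : NeZero (2 : ZMod p) := ⟨Ring.two_ne_zero <| by
    rw [ZMod.ringChar_zmod_n]; rintro rfl; exact Nat.not_odd_iff_even.2 even_two hodd⟩
  have hAut : (A.aut : Set (Equiv.Perm _)) =
      Set.range fun ku : ZMod p × (Fin 3 → ZMod p) => jordanAffinePerm ku.1 ku.2 := by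
    ext g
    simp only [SetLike.mem_coe, SRing.mem_aut_iff_exists_iterate jordanMap A hA,
      exists_iterate_jordanMap_eq_iff, Set.mem_range, Prod.exists, exists_jordanAffinePerm_eq_iff]
  calc Nat.card A.aut = Nat.card (ZMod p × (Fin 3 → ZMod p)) := by
        rw [← Nat.card_range_of_injective jordanAffinePerm_injective, ← hAut]
        rfl
    _ = p ^ 4 := by simp; ring
end
end
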